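/- arXiv:2202.10846 — 3 statements merged into one kernel-verified Lean document; each statement's English description precedes it below -/
import Mathlib

section
/- Let p be an odd prime, D a division ring of characteristic p, and K a subfield of D contained in the center of D. Suppose h, x ∈ D with x ≠ 0 and h*x = x*(h + 2), and suppose h is algebraic over K. Then the minimal polynomial of h over K has degree at least p. -/
/-!
From `h * x = x * (h + 2)` and the centrality of `K` we get `f(h) * x = x * f(h + 2)` for every
`f ∈ K[X]`; since `x ≠ 0` and `D` has no zero divisors, `h + 2` is again a root of the minimal
polynomial of `h`, and as every `h + 2n` satisfies the same relation with `x`, all of them are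
roots. For odd `p` the elements `h + 2n` with `n < p` are distinct, and they lie in the commutative
domain `K[h]`, where a nonzero polynomial has at most its degree many roots.
-/

open Polynomial
open scoped IsMulCommutative

theorem CharP.nsmul_injOn_Iio_of_coprime {R : Type*} [AddMonoidWithOne R] [IsRightCancelAdd R]
    (p : ℕ) [CharP R p] {a : ℕ} (ha : p.Coprime a) :
    (Set.Iio p).InjOn fun n : ℕ ↦ n • (a : R) := by
  have hcast (n : ℕ) : n • (a : R) = ((n * a : ℕ) : R) :=
    (map_nsmul (Nat.castAddMonoidHom R) n a).symm
  intro i hi j hj (hij : i • (a : R) = j • (a : R))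
  rw [hcast, hcast, CharP.natCast_eq_natCast R p] at hij
  exact (hij.cancel_right_of_coprime ha).eq_of_lt_of_lt hi hj

namespace Polynomial

theorem semiconjBy_aeval {R A : Type*} [CommSemiring R] [Semiring A] [Algebra R A] {x a b : A}
    (hab : SemiconjBy x a b) (f : R[X]) : SemiconjBy x (aeval a f) (aeval b f) := by
  induction f using Polynomial.induction_on' with
  | add f g hf hg => simpa only [map_add] using hf.add_right hg
  | monomial n c =>
    simpa only [aeval_monomial] using
      SemiconjBy.mul_right (Algebra.commutes c x).symm (hab.pow_right n)

theorem aeval_eq_zero_of_semiconjBy {R A : Type*} [CommSemiring R] [Semiring A] [NoZeroDivisors A]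
    [Algebra R A] {x a b : A} (hab : SemiconjBy x a b) (hx : x ≠ 0) {f : R[X]}
    (hf : aeval b f = 0) : aeval a f = 0 := by
  have hxa : x * aeval a f = 0 := by rw [(semiconjBy_aeval hab f).eq, hf, zero_mul]
  exact (mul_eq_zero.mp hxa).resolve_left hx

theorem aeval_add_nsmul_eq_zero_of_semiconjBy {R A : Type*} [CommSemiring R] [Semiring A]
    [NoZeroDivisors A] [Algebra R A] {x h c : A} (hx : x ≠ 0) (hshift : SemiconjBy x (h + c) h)
    (hc : Commute x c) {f : R[X]} (hf : aeval h f = 0) (n : ℕ) : aeval (h + n • c) f = 0 := by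
  induction n with
  | zero => rwa [zero_smul, add_zero]
  | succ n ih =>
    rw [succ_nsmul', ← add_assoc]
    exact aeval_eq_zero_of_semiconjBy (SemiconjBy.add_right hshift (hc.smul_right n)) hx ih

theorem ncard_le_natDegree_of_subset_adjoin_singleton {K D : Type*} [Field K] [Ring D]
    [IsDomain D] [Algebra K D] (h : D) {f : K[X]} (hf : f ≠ 0) {s : Set D}
    (hs : s ⊆ Algebra.adjoin K {h}) (hroot : ∀ a ∈ s, aeval a f = 0) :
    s.ncard ≤ f.natDegree := by
  let R := Algebra.adjoin K {h}
  have hsub : s ⊆ Subtype.val '' f.rootSet R := fun a ha ↦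
    ⟨⟨a, hs ha⟩, (mem_rootSet_of_ne hf).mpr (Subtype.ext (by simpa using hroot a ha)), rfl⟩
  calc s.ncard ≤ (Subtype.val '' f.rootSet R).ncard :=
        Set.ncard_le_ncard hsub ((rootSet_finite f R).image _)
    _ = (f.rootSet R).ncard := Set.ncard_image_of_injective _ Subtype.val_injective
    _ ≤ f.natDegree := ncard_rootSet_le f R

end Polynomial

theorem minpoly_degree_ge_of_shift_conjugate_general {K D : Type*} [Field K]
    [DivisionRing D] [Algebra K D] (p : ℕ) [CharP D p]
    (hodd : Odd p) (h x : D) (hx : x ≠ 0) (hshift : h * x = x * (h + 2))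
    (halg : IsIntegral K h) :
    p ≤ (minpoly K h).natDegree := by
  have hroot (n : ℕ) : aeval (h + n • 2) (minpoly K h) = 0 :=
    aeval_add_nsmul_eq_zero_of_semiconjBy hx hshift.symm (Commute.ofNat_right x 2)
      (minpoly.aeval K h) n
  have hinj : (Set.Iio p).InjOn fun n : ℕ ↦ h + n • (2 : D) := by
    have := CharP.nsmul_injOn_Iio_of_coprime (R := D) p (Nat.coprime_two_right.mpr hodd)
    exact (add_right_injective h).comp_injOn (by simpa only [Nat.cast_ofNat] using this)
  have hmem (n : ℕ) : h + n • 2 ∈ Algebra.adjoin K {h} :=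
    add_mem (Algebra.self_mem_adjoin_singleton K h) (nsmul_mem (ofNat_mem _ 2) n)
  calc p = ((fun n : ℕ ↦ h + n • (2 : D)) '' Set.Iio p).ncard := by
        rw [hinj.ncard_image, Set.ncard_Iio_nat]
    _ ≤ (minpoly K h).natDegree :=
      ncard_le_natDegree_of_subset_adjoin_singleton h (minpoly.ne_zero halg)
        (by rintro _ ⟨n, -, rfl⟩; exact hmem n) (by rintro _ ⟨n, -, rfl⟩; exact hroot n)

/-- Let `p` be an odd prime, `D` a division ring of characteristic `p`, and
`K` a central subfield of `D` (formalized as: `K` is a field with an algebra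
structure on `D`, so that `K` maps into the center of `D`).  If `h, x ∈ D`
with `x ≠ 0` and `h*x = x*(h+2)`, and `h` is algebraic over `K`, then the
minimal polynomial of `h` over `K` has degree at least `p`. -/
theorem minpoly_degree_ge_of_shift_conjugate {K D : Type*} [Field K]
    [DivisionRing D] [Algebra K D] (p : ℕ) [CharP D p] (hp : p.Prime)
    (hodd : Odd p) (h x : D) (hx : x ≠ 0) (hshift : h * x = x * (h + 2))
    (halg : IsIntegral K h) :
    p ≤ (minpoly K h).natDegree :=
  minpoly_degree_ge_of_shift_conjugate_general p hodd h x hx hshift halg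
end

section
/- Let F be a field of characteristic p > 0 and A a finite-dimensional associative unital F-algebra. Suppose there is an F-linear form t : A →ₗ[F] F such that t(u*v) = t(v*u) and t(u^p * v^p) = (t(u*v))^p for all u, v ∈ A, and such that the bilinear form (u,v) ↦ t(u*v) is nondegenerate (t(u*v) = 0 for all v implies u = 0). Then the Jacobson radical of A is trivial; equivalently, A is a semisimple ring. -/
/-!
Applying `hpow` with `v = 1` gives `t (uᵖ) = (t u)ᵖ`, so for nilpotent `w` some `(t w)^(p^k)`
equals `t (w^(p^k)) = t 0 = 0`, and `t w = 0`. The Jacobson radical `J` of the Artinian ring `A`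
is a nilpotent two-sided ideal, so for `u ∈ J` every `u * v` is nilpotent and `t (u * v) = 0`;
nondegeneracy gives `J = 0`, and an Artinian ring with zero Jacobson radical is semisimple.
-/

theorem map_pow_pow_of_map_pow {M N : Type*} [Monoid M] [Monoid N] {f : M → N} {p : ℕ}
    (hf : ∀ u, f (u ^ p) = f u ^ p) (k : ℕ) (u : M) : f (u ^ p ^ k) = f u ^ p ^ k := by
  induction k with
  | zero => simp
  | succ k ih => rw [pow_succ, pow_mul, hf, ih, ← pow_mul]

theorem map_eq_zero_of_isNilpotent_of_map_pow {M N : Type*} [MonoidWithZero M]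
    [MonoidWithZero N] [IsReduced N] {f : M → N} {p : ℕ} (hp : 1 < p) (hf0 : f 0 = 0)
    (hf : ∀ u, f (u ^ p) = f u ^ p) {u : M} (hu : IsNilpotent u) : f u = 0 := by
  obtain ⟨n, hn⟩ := hu
  refine IsNilpotent.eq_zero ⟨p ^ n, ?_⟩
  rw [← map_pow_pow_of_map_pow hf, pow_eq_zero_of_le (Nat.lt_pow_self hp).le hn, hf0]

theorem Ring.jacobson_eq_bot_of_nondegenerate {A R : Type*} [Ring A] [IsArtinianRing A] [Zero R]
    (t : A → R) (ht : ∀ w, IsNilpotent w → t w = 0)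
    (hnondeg : ∀ u : A, (∀ v, t (u * v) = 0) → u = 0) : Ring.jacobson A = ⊥ := by
  obtain ⟨n, hn⟩ : IsNilpotent (Ring.jacobson A) :=
    Ideal.jacobson_bot (R := A) ▸ IsArtinianRing.isNilpotent_jacobson_bot
  refine eq_bot_iff.mpr fun u hu ↦ hnondeg u fun v ↦ ht _ ⟨n, ?_⟩
  rw [← Ideal.mem_bot, ← Submodule.zero_eq_bot, ← hn]
  exact Ideal.pow_mem_pow (Ideal.mul_mem_right v _ hu) n

theorem semisimple_of_frobenius_compatible_trace_form_general {F A : Type*} [Field F]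
    (p : ℕ) [CharP F p] (hp : 0 < p) [Ring A] [Algebra F A]
    [FiniteDimensional F A] (t : A →ₗ[F] F)
    (hpow : ∀ u v : A, t (u ^ p * v ^ p) = (t (u * v)) ^ p)
    (hnondeg : ∀ u : A, (∀ v : A, t (u * v) = 0) → u = 0) :
    Ideal.jacobson (⊥ : Ideal A) = ⊥ ∧ IsSemisimpleRing A := by
  have : NeZero p := ⟨hp.ne'⟩
  have : IsArtinianRing A := .of_finite F A
  have hp1 : 1 < p := (CharP.char_is_prime_of_pos F p).out.one_lt
  have hfrob (u : A) : t (u ^ p) = t u ^ p := by simpa using hpow u 1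
  have hJ : Ring.jacobson A = ⊥ := Ring.jacobson_eq_bot_of_nondegenerate t
    (fun _ ↦ map_eq_zero_of_isNilpotent_of_map_pow hp1 t.map_zero hfrob) hnondeg
  exact ⟨Ideal.jacobson_bot (R := A) ▸ hJ, IsArtinianRing.isSemisimpleRing_iff_jacobson.mpr hJ⟩

/-- Let `F` be a field of characteristic `p > 0` and `A` a finite-dimensional
associative unital `F`-algebra.  If there is a linear form `t : A →ₗ[F] F`
which is symmetric (`t (u*v) = t (v*u)`), compatible with `p`-th powers
(`t (uᵖ * vᵖ) = (t (u*v))ᵖ`) and whose trace form is nondegenerate, then the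
Jacobson radical of `A` is trivial; equivalently, `A` is semisimple. -/
theorem semisimple_of_frobenius_compatible_trace_form {F A : Type*} [Field F]
    (p : ℕ) [CharP F p] (hp : 0 < p) [Ring A] [Algebra F A]
    [FiniteDimensional F A] (t : A →ₗ[F] F)
    (hsymm : ∀ u v : A, t (u * v) = t (v * u))
    (hpow : ∀ u v : A, t (u ^ p * v ^ p) = (t (u * v)) ^ p)
    (hnondeg : ∀ u : A, (∀ v : A, t (u * v) = 0) → u = 0) :
    Ideal.jacobson (⊥ : Ideal A) = ⊥ ∧ IsSemisimpleRing A :=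
  semisimple_of_frobenius_compatible_trace_form_general p hp t hpow hnondeg
end

section
/- Let F be a field of characteristic p > 2, and let L₅ be the F-linear span of the five matrices E₂₃, E₃₂, E₂₂ − E₃₃, E₁₂, E₁₃ inside the 3×3 matrices over F (where E_{ij} is the elementary matrix with 1 in position (i,j) and 0 elsewhere), with Lie bracket the matrix commutator. Then L₅ is a Lie subalgebra of gl(3,F) of dimension 5, its center is trivial, and L₅ is indecomposable: for any Lie ideals I, J of L₅ with I ⊓ J = ⊥ and I ⊔ J = ⊤, either I = ⊥ or J = ⊥. -/
/-!
In coordinates `L₅` is the space of matrices with zero first column and `m₂₂ + m₃₃ = 0`: the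
semidirect product of `⟨E₂₃, E₃₂, E₂₂ - E₃₃⟩` with the module `V = ⟨E₁₂, E₁₃⟩`. Bracketing with
`E₁₂` and `E₁₃` sends every element into `V`, and both brackets vanish only on `V` itself. On `V`,
`E₂₂ - E₃₃` acts by `-1` on `E₁₂` and by `1` on `E₁₃`, while `E₂₃` and `E₃₂` exchange the two
lines. Hence a central element is `0`, and every nonzero ideal contains `E₁₂`, so two nonzero
ideals never meet trivially.
-/

attribute [local instance 100] LieRing.ofAssociativeRing

/-- The five-matrix span defining the Lie algebra `L₅` of Proposition 4.15:
the span of `E₂₃, E₃₂, E₂₂ - E₃₃, E₁₂, E₁₃` inside the 3×3 matrices. -/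
def L5carrier (F : Type*) [Field F] : Submodule F (Matrix (Fin 3) (Fin 3) F) :=
  Submodule.span F
    {Matrix.single 1 2 (1 : F), Matrix.single 2 1 (1 : F),
      Matrix.single 1 1 (1 : F) - Matrix.single 2 2 (1 : F),
      Matrix.single 0 1 (1 : F), Matrix.single 0 2 (1 : F)}

theorem LieIdeal.eq_bot_or_eq_bot_of_inf_eq_bot {R L : Type*} [CommRing R] [LieRing L]
    [LieAlgebra R L] {x : L} (hx : x ≠ 0) (hmem : ∀ I : LieIdeal R L, I ≠ ⊥ → x ∈ I)
    {I J : LieIdeal R L} (hIJ : I ⊓ J = ⊥) : I = ⊥ ∨ J = ⊥ := by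
  by_contra! h
  have hxIJ : x ∈ I ⊓ J := ⟨hmem I h.1, hmem J h.2⟩
  rw [hIJ, LieSubmodule.mem_bot] at hxIJ
  exact hx hxIJ

section L5

open Matrix

variable {F : Type*} [Field F]

-- Indices are 0-based: `E[0, 1]` is the paper's `E₁₂`.
local notation "E[" i ", " j "]" => (single i j (1 : F) : Matrix (Fin 3) (Fin 3) F)

def L5constraints : Matrix (Fin 3) (Fin 3) F →ₗ[F] Fin 4 → F where
  toFun m := ![m 0 0, m 1 0, m 2 0, m 1 1 + m 2 2]
  map_add' x y := by
    funext i; fin_cases i <;> simp [add_add_add_comm]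
  map_smul' c x := by
    funext i; fin_cases i <;> simp [mul_add]

theorem L5carrier_eq_ker : L5carrier F = LinearMap.ker (L5constraints (F := F)) := by
  refine le_antisymm (Submodule.span_le.2 ?_) fun m hm => ?_
  · rintro _ (rfl | rfl | rfl | rfl | rfl) <;> funext i <;> fin_cases i <;>
      simp [L5constraints]
  · have h00 : m 0 0 = 0 := congrFun hm 0
    have h10 : m 1 0 = 0 := congrFun hm 1
    have h20 : m 2 0 = 0 := congrFun hm 2
    have h22 : m 2 2 = -m 1 1 := eq_neg_of_add_eq_zero_right (congrFun hm 3)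
    have hm : m = m 1 2 • E[1, 2] + m 2 1 • E[2, 1] + m 1 1 • (E[1, 1] - E[2, 2])
        + m 0 1 • E[0, 1] + m 0 2 • E[0, 2] := by
      ext i j
      fin_cases i <;> fin_cases j <;> simp [h00, h10, h20, h22]
    rw [hm]
    refine add_mem (add_mem (add_mem (add_mem ?_ ?_) ?_) ?_) ?_ <;>
      exact Submodule.smul_mem _ _ (Submodule.subset_span (by simp))

theorem mem_L5carrier_iff {m : Matrix (Fin 3) (Fin 3) F} :
    m ∈ L5carrier F ↔ m 0 0 = 0 ∧ m 1 0 = 0 ∧ m 2 0 = 0 ∧ m 1 1 + m 2 2 = 0 := by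
  simp [L5carrier_eq_ker, L5constraints, funext_iff, Fin.forall_fin_succ]

theorem L5constraints_surjective : Function.Surjective (L5constraints (F := F)) := by
  intro v
  refine ⟨v 0 • E[0, 0] + v 1 • E[1, 0] + v 2 • E[2, 0] + v 3 • E[1, 1], ?_⟩
  funext i
  fin_cases i <;> simp [L5constraints]

theorem finrank_L5carrier : Module.finrank F (L5carrier F) = 5 := by
  have h := (L5constraints (F := F)).finrank_range_add_finrank_ker
  rw [LinearMap.range_eq_top.2 L5constraints_surjective, finrank_top, ← L5carrier_eq_ker] at h
  simp only [Module.finrank_fin_fun, Module.finrank_matrix, Module.finrank_self,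
    Fintype.card_fin] at h
  omega

theorem single_mem_L5carrier (i j : Fin 3) (hij : i ≠ j := by decide)
    (hj : j ≠ 0 := by decide) : E[i, j] ∈ L5carrier F := by
  rw [mem_L5carrier_iff]
  fin_cases i <;> fin_cases j <;> simp_all

theorem diag_mem_L5carrier : E[1, 1] - E[2, 2] ∈ L5carrier F :=
  Submodule.subset_span (by simp)

theorem lie_mem_L5carrier {x y : Matrix (Fin 3) (Fin 3) F} (hx : x ∈ L5carrier F)
    (hy : y ∈ L5carrier F) : ⁅x, y⁆ ∈ L5carrier F := by
  rw [mem_L5carrier_iff] at hx hy ⊢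
  obtain ⟨hx00, hx10, hx20, -⟩ := hx
  obtain ⟨hy00, hy10, hy20, -⟩ := hy
  refine ⟨?_, ?_, ?_, ?_⟩ <;>
    simp [Ring.lie_def, mul_apply, Fin.sum_univ_three, hx00, hx10, hx20, hy00, hy10, hy20]
  -- the entry `0 0` of a commutator of such matrices vanishes, so this is its trace
  ring

variable (F) in
def L5 : LieSubalgebra F (Matrix (Fin 3) (Fin 3) F) :=
  { L5carrier F with lie_mem' := lie_mem_L5carrier }

theorem mem_L5 {m : Matrix (Fin 3) (Fin 3) F} : m ∈ L5 F ↔ m ∈ L5carrier F :=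
  Iff.rfl

theorem lie_single_zero_one {y : Matrix (Fin 3) (Fin 3) F} (hy : y ∈ L5carrier F) :
    ⁅E[0, 1], y⁆ = y 1 1 • E[0, 1] + y 1 2 • E[0, 2] := by
  rw [mem_L5carrier_iff] at hy
  obtain ⟨h00, h10, h20, -⟩ := hy
  ext i j
  fin_cases i <;> fin_cases j <;>
    simp [Ring.lie_def, mul_apply, Fin.sum_univ_three, h00, h10, h20]

theorem lie_single_zero_two {y : Matrix (Fin 3) (Fin 3) F} (hy : y ∈ L5carrier F) :
    ⁅E[0, 2], y⁆ = y 2 1 • E[0, 1] - y 1 1 • E[0, 2] := by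
  rw [mem_L5carrier_iff] at hy
  obtain ⟨h00, h10, h20, h⟩ := hy
  ext i j
  fin_cases i <;> fin_cases j <;>
    simp [Ring.lie_def, mul_apply, Fin.sum_univ_three, h00, h10, h20]
  linear_combination h

theorem eq_top_row_of_mem_L5carrier {y : Matrix (Fin 3) (Fin 3) F} (hy : y ∈ L5carrier F)
    (h11 : y 1 1 = 0) (h12 : y 1 2 = 0) (h21 : y 2 1 = 0) :
    y = y 0 1 • E[0, 1] + y 0 2 • E[0, 2] := by
  rw [mem_L5carrier_iff] at hy
  obtain ⟨h00, h10, h20, h⟩ := hy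
  have h22 : y 2 2 = 0 := by linear_combination h - h11
  ext i j
  fin_cases i <;> fin_cases j <;> simp [h00, h10, h20, h11, h12, h21, h22]

theorem lie_diag_top_row (α β : F) :
    ⁅E[1, 1] - E[2, 2], α • E[0, 1] + β • E[0, 2]⁆ = -α • E[0, 1] + β • E[0, 2] := by
  ext i j
  fin_cases i <;> fin_cases j <;> simp [Ring.lie_def, mul_apply, Fin.sum_univ_three]

theorem lie_single_one_two_top_row (α β : F) :
    ⁅E[1, 2], α • E[0, 1] + β • E[0, 2]⁆ = -α • E[0, 2] := by
  ext i j
  fin_cases i <;> fin_cases j <;> simp [Ring.lie_def, mul_apply, Fin.sum_univ_three]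

theorem lie_single_two_one_top_row (α β : F) :
    ⁅E[2, 1], α • E[0, 1] + β • E[0, 2]⁆ = -β • E[0, 1] := by
  ext i j
  fin_cases i <;> fin_cases j <;> simp [Ring.lie_def, mul_apply, Fin.sum_univ_three]

theorem eq_zero_of_forall_lie_eq_zero {z : Matrix (Fin 3) (Fin 3) F} (hz : z ∈ L5carrier F)
    (h : ∀ m ∈ L5carrier F, ⁅m, z⁆ = 0) : z = 0 := by
  have hlie01 := h _ (single_mem_L5carrier 0 1)
  have hlie02 := h _ (single_mem_L5carrier 0 2)
  rw [lie_single_zero_one hz] at hlie01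
  rw [lie_single_zero_two hz] at hlie02
  have h11 : z 1 1 = 0 := by simpa using congrFun (congrFun hlie01 0) 1
  have h12 : z 1 2 = 0 := by simpa using congrFun (congrFun hlie01 0) 2
  have h21 : z 2 1 = 0 := by simpa using congrFun (congrFun hlie02 0) 1
  rw [eq_top_row_of_mem_L5carrier hz h11 h12 h21] at h ⊢
  have hH := h _ diag_mem_L5carrier
  rw [lie_diag_top_row] at hH
  have h01 : z 0 1 = 0 := by simpa using congrFun (congrFun hH 0) 1
  have h02 : z 0 2 = 0 := by simpa using congrFun (congrFun hH 0) 2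
  simp [h01, h02]

theorem single_zero_one_mem_of_top_row_mem {S : Submodule F (Matrix (Fin 3) (Fin 3) F)}
    (hS : ∀ m ∈ L5carrier F, ∀ s ∈ S, ⁅m, s⁆ ∈ S) {α β : F}
    (hv : α • E[0, 1] + β • E[0, 2] ∈ S) (hαβ : α ≠ 0 ∨ β ≠ 0) : E[0, 1] ∈ S := by
  have of_ne_zero_right {a b : F} (hv : a • E[0, 1] + b • E[0, 2] ∈ S) (hb : b ≠ 0) :
      E[0, 1] ∈ S := by
    have := S.smul_mem (-b)⁻¹ (hS _ (single_mem_L5carrier 2 1) _ hv)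
    rwa [lie_single_two_one_top_row, smul_smul, inv_mul_cancel₀ (neg_ne_zero.2 hb),
      one_smul] at this
  rcases hαβ with hα | hβ
  · refine of_ne_zero_right (a := 0) (b := 1) ?_ one_ne_zero
    have := S.smul_mem (-α)⁻¹ (hS _ (single_mem_L5carrier 1 2) _ hv)
    rw [zero_smul, zero_add]
    rwa [lie_single_one_two_top_row, smul_smul, inv_mul_cancel₀ (neg_ne_zero.2 hα)] at this
  · exact of_ne_zero_right hv hβ

theorem single_zero_one_mem_of_ne_bot {S : Submodule F (Matrix (Fin 3) (Fin 3) F)}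
    (hSL : S ≤ L5carrier F) (hS : ∀ m ∈ L5carrier F, ∀ s ∈ S, ⁅m, s⁆ ∈ S) (hne : S ≠ ⊥) :
    E[0, 1] ∈ S := by
  obtain ⟨y, hyS, hy0⟩ := Submodule.exists_mem_ne_zero_of_ne_bot hne
  have hyL := hSL hyS
  by_cases htop : y 1 1 = 0 ∧ y 1 2 = 0 ∧ y 2 1 = 0
  · obtain ⟨h11, h12, h21⟩ := htop
    rw [eq_top_row_of_mem_L5carrier hyL h11 h12 h21] at hyS hy0
    refine single_zero_one_mem_of_top_row_mem hS hyS ?_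
    by_contra! h
    simp [h] at hy0
  · have h01 := hS _ (single_mem_L5carrier 0 1) _ hyS
    rw [lie_single_zero_one hyL] at h01
    by_cases h : y 1 1 = 0 ∧ y 1 2 = 0
    · have h02 := hS _ (single_mem_L5carrier 0 2) _ hyS
      rw [lie_single_zero_two hyL, sub_eq_add_neg, ← neg_smul] at h02
      exact single_zero_one_mem_of_top_row_mem hS h02
        (Or.inl fun h21 => htop ⟨h.1, h.2, h21⟩)
    · exact single_zero_one_mem_of_top_row_mem hS h01 (not_and_or.1 h)

theorem center_L5_eq_bot : LieAlgebra.center F (L5 F) = ⊥ := by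
  refine (LieSubmodule.eq_bot_iff _).2 fun z hz => Subtype.ext ?_
  refine eq_zero_of_forall_lie_eq_zero z.2 fun m hm => ?_
  exact congrArg Subtype.val ((LieModule.mem_maxTrivSubmodule F _ _ z).1 hz ⟨m, hm⟩)

theorem single_zero_one_mem_lieIdeal {I : LieIdeal F (L5 F)} (hI : I ≠ ⊥) :
    (⟨E[0, 1], mem_L5.2 (single_mem_L5carrier 0 1)⟩ : L5 F) ∈ I := by
  let S := I.toSubmodule.map ((L5 F).incl : L5 F →ₗ[F] Matrix (Fin 3) (Fin 3) F)
  have hSL : S ≤ L5carrier F := by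
    rintro _ ⟨x, -, rfl⟩
    exact x.2
  have hS : ∀ m ∈ L5carrier F, ∀ s ∈ S, ⁅m, s⁆ ∈ S := by
    rintro m hm _ ⟨x, hx, rfl⟩
    exact ⟨⁅⟨m, mem_L5.2 hm⟩, x⁆, I.lie_mem hx, rfl⟩
  have hne : S ≠ ⊥ := by
    rwa [Ne, ← Submodule.map_bot ((L5 F).incl : L5 F →ₗ[F] Matrix (Fin 3) (Fin 3) F),
      (Submodule.map_injective_of_injective Subtype.val_injective).eq_iff,
      LieSubmodule.toSubmodule_eq_bot]
  obtain ⟨⟨m, hm⟩, hx, hme⟩ := single_zero_one_mem_of_ne_bot hSL hS hne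
  obtain rfl : m = E[0, 1] := hme
  exact hx

end L5

theorem L5_centerless_indecomposable_general {F : Type*} [Field F] :
    (∀ x y : Matrix (Fin 3) (Fin 3) F,
        x ∈ L5carrier F → y ∈ L5carrier F → ⁅x, y⁆ ∈ L5carrier F) ∧
    ∀ L₅ : LieSubalgebra F (Matrix (Fin 3) (Fin 3) F),
      (L₅ : Submodule F (Matrix (Fin 3) (Fin 3) F)) = L5carrier F →
        Module.finrank F L₅ = 5 ∧
        LieAlgebra.center F L₅ = ⊥ ∧
        (∀ I J : LieIdeal F L₅, I ⊓ J = ⊥ → I ⊔ J = ⊤ → I = ⊥ ∨ J = ⊥) := by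
  refine ⟨fun x y => lie_mem_L5carrier, fun L₅ hL => ?_⟩
  obtain rfl : L₅ = L5 F := LieSubalgebra.toSubmodule_injective hL
  refine ⟨finrank_L5carrier, center_L5_eq_bot, fun I J hIJ _ => ?_⟩
  refine LieIdeal.eq_bot_or_eq_bot_of_inf_eq_bot (fun h => ?_)
    (fun I hI => single_zero_one_mem_lieIdeal hI) hIJ
  simpa using congrFun (congrFun (congrArg Subtype.val h) 0) 1

/-- Proposition 4.15 (expressible part): over a field of characteristic
`p > 2`, the span `L₅` of `E₂₃, E₃₂, E₂₂ − E₃₃, E₁₂, E₁₃` in `gl(3,F)` is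
closed under the matrix commutator bracket, and any Lie subalgebra of
`gl(3,F)` with this carrier has dimension 5, trivial center, and is
indecomposable. -/
theorem L5_centerless_indecomposable {F : Type*} [Field F] (p : ℕ)
    [CharP F p] (hp : 2 < p) :
    (∀ x y : Matrix (Fin 3) (Fin 3) F,
        x ∈ L5carrier F → y ∈ L5carrier F → ⁅x, y⁆ ∈ L5carrier F) ∧
    ∀ L₅ : LieSubalgebra F (Matrix (Fin 3) (Fin 3) F),
      (L₅ : Submodule F (Matrix (Fin 3) (Fin 3) F)) = L5carrier F →
        Module.finrank F L₅ = 5 ∧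
        LieAlgebra.center F L₅ = ⊥ ∧
        (∀ I J : LieIdeal F L₅, I ⊓ J = ⊥ → I ⊔ J = ⊤ → I = ⊥ ∨ J = ⊥) :=
  L5_centerless_indecomposable_general
end
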